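/- arXiv:2504.04165 — 5 statements merged into one kernel-verified Lean document; each statement's English description precedes it below -/
import Mathlib

section
/- Let B : ℝ³ → ℝ³ be locally Lipschitz continuous. Then for every x₀, v₀ ∈ ℝ³ and every ω ∈ ℝ, the initial value problem x''(t) = ω x'(t) × B(x(t)), x(0) = x₀, x'(0) = v₀ admits a unique solution x : ℝ → ℝ³ defined for all times t ∈ ℝ; moreover x is twice continuously differentiable with locally Lipschitz second derivative. -/
noncomputable section

open Real Filter Topology MeasureTheory intervalIntegral Bornology

abbrev E3 : Type := EuclideanSpace ℝ (Fin 3)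

def cross3 (u v : E3) : E3 :=
  (WithLp.equiv 2 (Fin 3 → ℝ)).symm
    ![u 1 * v 2 - u 2 * v 1, u 2 * v 0 - u 0 * v 2, u 0 * v 1 - u 1 * v 0]

def divg (F : E3 → E3) (y : E3) : ℝ :=
  ∑ i : Fin 3, fderiv ℝ F y (EuclideanSpace.single i (1:ℝ)) i

def curl3 (F : E3 → E3) (y : E3) : E3 :=
  (WithLp.equiv 2 (Fin 3 → ℝ)).symm
    ![fderiv ℝ F y (EuclideanSpace.single 1 (1:ℝ)) 2 - fderiv ℝ F y (EuclideanSpace.single 2 (1:ℝ)) 1,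
      fderiv ℝ F y (EuclideanSpace.single 2 (1:ℝ)) 0 - fderiv ℝ F y (EuclideanSpace.single 0 (1:ℝ)) 2,
      fderiv ℝ F y (EuclideanSpace.single 0 (1:ℝ)) 1 - fderiv ℝ F y (EuclideanSpace.single 1 (1:ℝ)) 0]

def bdir (B : E3 → E3) (y : E3) : E3 := ‖B y‖⁻¹ • B y

def IsLorentzSol (B : E3 → E3) (ω : ℝ) (x₀ v₀ : E3) (x : ℝ → E3) : Prop :=
  x 0 = x₀ ∧ deriv x 0 = v₀ ∧ Differentiable ℝ x ∧
    ∀ t : ℝ, HasDerivAt (deriv x) (ω • cross3 (deriv x t) (B (x t))) t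

def IsLimitSol (B : E3 → E3) (x₀ v₀ : E3) (x : ℝ → E3) (h : ℝ → ℝ) : Prop :=
  x 0 = x₀ ∧ h 0 = (inner ℝ v₀ (bdir B x₀) : ℝ) ∧
    (∀ t : ℝ, HasDerivAt x (h t • bdir B (x t)) t) ∧
    (∀ t : ℝ, HasDerivAt h ((‖v₀‖ ^ 2 - h t ^ 2) / 2 * divg (bdir B) (x t)) t)

def IsCkBounded (k : ℕ) (B : E3 → E3) : Prop :=
  ContDiff ℝ k B ∧ ∀ i ≤ k, ∃ M : ℝ, ∀ y : E3, ‖iteratedFDeriv ℝ i B y‖ ≤ M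

def MinimalGrowth (γ : ℝ) (B : E3 → E3) : Prop :=
  ∃ R C : ℝ, 0 < R ∧ 0 < C ∧ ∀ y : E3, R ≤ ‖y‖ → C / ‖y‖ ^ γ ≤ ‖B y‖

/-!
In phase space `z = (x, x')` the equation reads `z' = F z` with
`F (x, v) = (v, ω • v × B x)`, a locally Lipschitz field, so uniqueness is Cauchy–Lipschitz.
Since `v × B x ⊥ v`, the speed `‖x'‖` is conserved and `‖x t - x₀‖ ≤ |t| ‖v₀‖`. Multiplying `F`
by a scalar cutoff that is `1` on a large ball gives a bounded locally Lipschitz field, which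
has a solution on any `[-T, T]`; the scalar factor preserves speed conservation, so for a ball
of radius depending on `T` this solution never leaves the region where the cutoff is `1` and
solves the original equation. Solutions for different `T` agree by uniqueness and glue to a
global one, and `x'' = (F z).2` is locally Lipschitz as `F` and the `C¹` curve `z` are.
-/

open Set Metric
open scoped NNReal

lemma LocallyLipschitz.of_forall_isCompact {X Y : Type*} [PseudoEMetricSpace X]
    [WeaklyLocallyCompactSpace X] [PseudoEMetricSpace Y] {f : X → Y}
    (hf : ∀ K : Set X, IsCompact K → ∃ L : ℝ≥0, LipschitzOnWith L f K) : LocallyLipschitz f :=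
  fun x ↦
    have ⟨K, hK, hKx⟩ := exists_compact_mem_nhds x
    have ⟨L, hL⟩ := hf K hK
    ⟨L, K, hKx, hL⟩

section AutonomousODE

variable {E : Type*} [NormedAddCommGroup E] [NormedSpace ℝ E] {v : E → E}

theorem LocallyLipschitz.eqOn_Icc_of_hasDerivAt (hv : LocallyLipschitz v) {f g : ℝ → E}
    {a b t₀ : ℝ} (ht₀ : t₀ ∈ Ioo a b)
    (hf : ContinuousOn f (Icc a b)) (hf' : ∀ t ∈ Ioo a b, HasDerivAt f (v (f t)) t)
    (hg : ContinuousOn g (Icc a b)) (hg' : ∀ t ∈ Ioo a b, HasDerivAt g (v (g t)) t)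
    (heq : f t₀ = g t₀) : EqOn f g (Icc a b) := by
  set K := f '' Icc a b ∪ g '' Icc a b
  obtain ⟨L, hL⟩ := hv.locallyLipschitzOn.exists_lipschitzOnWith_of_compact
    ((isCompact_Icc.image_of_continuousOn hf).union (isCompact_Icc.image_of_continuousOn hg))
  exact ODE_solution_unique_of_mem_Icc (v := fun _ ↦ v) (s := fun _ ↦ K) (fun _ _ ↦ hL) ht₀
    hf hf' (fun t ht ↦ .inl (mem_image_of_mem f (Ioo_subset_Icc_self ht)))
    hg hg' (fun t ht ↦ .inr (mem_image_of_mem g (Ioo_subset_Icc_self ht))) heq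

theorem LocallyLipschitz.eq_of_hasDerivAt (hv : LocallyLipschitz v) {f g : ℝ → E} {t₀ : ℝ}
    (hf : ∀ t, HasDerivAt f (v (f t)) t) (hg : ∀ t, HasDerivAt g (v (g t)) t)
    (heq : f t₀ = g t₀) : f = g := by
  funext t
  obtain ⟨T, ht, ht₀⟩ : ∃ T, |t| < T ∧ |t₀| < T :=
    ⟨|t| + |t₀| + 1, by linarith [abs_nonneg t₀], by linarith [abs_nonneg t]⟩
  exact hv.eqOn_Icc_of_hasDerivAt (abs_lt.1 ht₀)
    (HasDerivAt.continuousOn fun s _ ↦ hf s) (fun s _ ↦ hf s)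
    (HasDerivAt.continuousOn fun s _ ↦ hg s) (fun s _ ↦ hg s) heq
    (Ioo_subset_Icc_self (abs_lt.1 ht))

theorem LocallyLipschitz.exists_forall_mem_Icc_hasDerivWithinAt_of_norm_le [ProperSpace E]
    (hv : LocallyLipschitz v) {C : ℝ≥0} (hC : ∀ x, ‖v x‖ ≤ C) (x₀ : E) {T : ℝ} (hT : 0 ≤ T) :
    ∃ α : ℝ → E, α 0 = x₀ ∧
      ∀ t ∈ Icc (-T) T, HasDerivWithinAt α (v (α t)) (Icc (-T) T) t := by
  obtain ⟨K, hK⟩ := hv.locallyLipschitzOn.exists_lipschitzOnWith_of_compact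
    (isCompact_closedBall x₀ (C * T).toNNReal)
  have hPL : IsPicardLindelof (fun _ ↦ v) (tmin := -T) (tmax := T) ⟨0, by simp [hT]⟩
      x₀ (C * T).toNNReal 0 C K :=
    { lipschitzOnWith := fun _ _ ↦ hK
      continuousOn := fun _ _ ↦ continuousOn_const
      norm_le := fun _ _ x _ ↦ hC x
      mul_max_le := by simp [Real.coe_toNNReal _ (by positivity : (0 : ℝ) ≤ C * T)] }
  exact hPL.exists_eq_forall_mem_Icc_hasDerivWithinAt₀

theorem LocallyLipschitz.exists_forall_hasDerivAt_of_forall_Icc (hv : LocallyLipschitz v)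
    (x₀ : E)
    (h : ∀ T > 0, ∃ α : ℝ → E, α 0 = x₀ ∧
      ∀ t ∈ Icc (-T) T, HasDerivWithinAt α (v (α t)) (Icc (-T) T) t) :
    ∃ γ : ℝ → E, γ 0 = x₀ ∧ ∀ t, HasDerivAt γ (v (γ t)) t := by
  choose α hα0 hα using h
  have hasDerivAt_of_lt {T} (hT : 0 < T) {t} (ht : |t| < T) :
      HasDerivAt (α T hT) (v (α T hT t)) t :=
    (hα T hT t (Ioo_subset_Icc_self (abs_lt.1 ht))).hasDerivAt
      (Icc_mem_nhds (abs_lt.1 ht).1 (abs_lt.1 ht).2)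
  have agree {T S} (hT : 0 < T) (hS : 0 < S) {s} (hs : |s| ≤ min T S) :
      α T hT s = α S hS s := by
    set m := min T S
    have hm : 0 < m := lt_min hT hS
    have continuousOn_of_le {U} (hU : 0 < U) (hmU : m ≤ U) : ContinuousOn (α U hU) (Icc (-m) m) :=
      fun t ht ↦ (hα U hU t ⟨by linarith [ht.1], by linarith [ht.2]⟩).continuousWithinAt.mono
        (Icc_subset_Icc (by linarith) hmU)
    have lt_of_mem {U} (hmU : m ≤ U) {t} (ht : t ∈ Ioo (-m) m) : |t| < U :=
      (abs_lt.2 ht).trans_le hmU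
    exact hv.eqOn_Icc_of_hasDerivAt ⟨neg_lt_zero.2 hm, hm⟩
      (continuousOn_of_le hT (min_le_left T S))
      (fun t ht ↦ hasDerivAt_of_lt hT (lt_of_mem (min_le_left T S) ht))
      (continuousOn_of_le hS (min_le_right T S))
      (fun t ht ↦ hasDerivAt_of_lt hS (lt_of_mem (min_le_right T S) ht))
      (by rw [hα0, hα0]) (abs_le.1 hs)
  refine ⟨fun t ↦ α (|t| + 1) (by positivity) t, hα0 _ _, fun t ↦ ?_⟩
  have hγ : (fun s ↦ α (|s| + 1) (by positivity) s) =ᶠ[𝓝 t] α (|t| + 1) (by positivity) := by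
    filter_upwards [(continuous_abs.tendsto t).eventually (gt_mem_nhds (lt_add_one |t|))]
      with s hs
    exact agree _ _ (le_min (by linarith) hs.le)
  exact (hasDerivAt_of_lt _ (lt_add_one |t|)).congr_of_eventuallyEq hγ

theorem contDiff_one_of_hasDerivAt (hv : Continuous v) {γ : ℝ → E}
    (hγ : ∀ t, HasDerivAt γ (v (γ t)) t) : ContDiff ℝ 1 γ := by
  have hγ' : deriv γ = fun t ↦ v (γ t) := funext fun t ↦ (hγ t).deriv
  have hdiff : Differentiable ℝ γ := fun t ↦ (hγ t).differentiableAt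
  exact contDiff_one_iff_deriv.2 ⟨hdiff, hγ' ▸ hv.comp hdiff.continuous⟩

end AutonomousODE

section Cutoff

variable {F : Type*} [NormedAddCommGroup F]

def cutoff (R : ℝ) (z : F) : ℝ := max 0 (min 1 (R + 1 - ‖z‖))

lemma cutoff_nonneg (R : ℝ) (z : F) : 0 ≤ cutoff R z := le_max_left _ _

lemma cutoff_le_one (R : ℝ) (z : F) : cutoff R z ≤ 1 := max_le zero_le_one (min_le_left _ _)

lemma norm_cutoff_le_one (R : ℝ) (z : F) : ‖cutoff R z‖ ≤ 1 := by
  rw [Real.norm_of_nonneg (cutoff_nonneg R z)]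
  exact cutoff_le_one R z

lemma cutoff_eq_one {R : ℝ} {z : F} (hz : ‖z‖ ≤ R) : cutoff R z = 1 := by
  rw [cutoff, min_eq_left (by linarith), max_eq_right zero_le_one]

lemma cutoff_eq_zero {R : ℝ} {z : F} (hz : R + 1 ≤ ‖z‖) : cutoff R z = 0 :=
  max_eq_left ((min_le_right _ _).trans (by linarith))

lemma locallyLipschitz_cutoff (R : ℝ) : LocallyLipschitz (cutoff R : F → ℝ) :=
  (((LipschitzWith.const (R + 1)).sub lipschitzWith_one_norm).locallyLipschitz.const_min
    1).const_max 0

variable [NormedSpace ℝ F] {v : F → F}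

lemma LocallyLipschitz.cutoff_smul (hv : LocallyLipschitz v) (R : ℝ) :
    LocallyLipschitz fun z ↦ cutoff R z • v z :=
  (contDiff_smul (𝕜 := ℝ) (n := 1)).locallyLipschitz.comp ((locallyLipschitz_cutoff R).prodMk hv)

lemma Continuous.exists_norm_cutoff_smul_le [ProperSpace F] (hv : Continuous v) (R : ℝ) :
    ∃ C : ℝ≥0, ∀ z, ‖cutoff R z • v z‖ ≤ C := by
  obtain ⟨M, hM⟩ := (isCompact_closedBall (0 : F) (R + 1)).exists_bound_of_continuousOn
    hv.continuousOn
  refine ⟨M.toNNReal, fun z ↦ ?_⟩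
  rcases le_or_gt ‖z‖ (R + 1) with hz | hz
  · calc ‖cutoff R z • v z‖ = cutoff R z * ‖v z‖ := by
          rw [norm_smul, Real.norm_of_nonneg (cutoff_nonneg R z)]
      _ ≤ 1 * M := mul_le_mul (cutoff_le_one R z) (hM z (mem_closedBall_zero_iff.2 hz))
          (norm_nonneg _) zero_le_one
      _ ≤ M.toNNReal := by simp
  · simp [cutoff_eq_zero hz.le]

end Cutoff

lemma contDiff_cross3 {n : WithTop ℕ∞} : ContDiff ℝ n fun p : E3 × E3 ↦ cross3 p.1 p.2 := by
  rw [contDiff_piLp]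
  intro i
  fin_cases i <;> simp only [cross3, WithLp.equiv_symm_apply, Fin.zero_eta, Fin.mk_one,
    Fin.reduceFinMk, Matrix.cons_val] <;> fun_prop

lemma inner_self_cross3 (u w : E3) : inner ℝ u (cross3 u w) = 0 := by
  simp only [cross3, WithLp.equiv_symm_apply, PiLp.inner_apply, RCLike.inner_apply,
    ringHom_apply, Fin.sum_univ_three, Matrix.cons_val_zero, Matrix.cons_val_one, Matrix.cons_val]
  ring

def lorentzField (B : E3 → E3) (ω : ℝ) (z : E3 × E3) : E3 × E3 :=
  (z.2, ω • cross3 z.2 (B z.1))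

section LorentzField

variable {B : E3 → E3}

lemma locallyLipschitz_lorentzField (hB : LocallyLipschitz B) (ω : ℝ) :
    LocallyLipschitz (lorentzField B ω) := by
  have hsnd : LocallyLipschitz (Prod.snd : E3 × E3 → E3) := LipschitzWith.prod_snd.locallyLipschitz
  have hfst : LocallyLipschitz (Prod.fst : E3 × E3 → E3) := LipschitzWith.prod_fst.locallyLipschitz
  have hcross : LocallyLipschitz fun p : E3 × E3 ↦ ω • cross3 p.1 p.2 :=
    ((contDiff_cross3 (n := 1)).const_smul ω).locallyLipschitz
  have h1 : LocallyLipschitz fun z : E3 × E3 ↦ (z.2, B z.1) := hsnd.prodMk (hB.comp hfst)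
  have h2 : LocallyLipschitz fun z : E3 × E3 ↦ ω • cross3 z.2 (B z.1) := (hcross.comp h1 :)
  unfold lorentzField
  exact hsnd.prodMk h2

lemma continuous_lorentzField (hB : Continuous B) (ω : ℝ) : Continuous (lorentzField B ω) :=
  continuous_snd.prodMk <| (((contDiff_cross3 (n := 0)).continuous.const_smul ω).comp
    (continuous_snd.prodMk (hB.comp continuous_fst)) :)

section SpeedConservation

variable {ω : ℝ} {c : E3 × E3 → ℝ} {Z : ℝ → E3 × E3} {s : Set ℝ}

lemma norm_snd_eq_of_hasDerivWithinAt_smul_lorentzField (hs : Convex ℝ s)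
    (hZ : ∀ t ∈ s, HasDerivWithinAt Z (c (Z t) • lorentzField B ω (Z t)) s t)
    {t t' : ℝ} (ht : t ∈ s) (ht' : t' ∈ s) : ‖(Z t).2‖ = ‖(Z t').2‖ := by
  have hconst : ∀ τ ∈ s, HasDerivWithinAt (fun τ ↦ ‖(Z τ).2‖ ^ 2) 0 s τ := fun τ hτ ↦ by
    simpa [lorentzField, inner_smul_right, inner_self_cross3] using
      (hasFDerivAt_snd.comp_hasDerivWithinAt τ (hZ τ hτ)).norm_sq
  have := hs.norm_image_sub_le_of_norm_hasDerivWithin_le hconst (fun _ _ ↦ norm_zero.le) ht' ht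
  rw [zero_mul, norm_le_zero_iff, sub_eq_zero] at this
  exact (sq_eq_sq₀ (norm_nonneg _) (norm_nonneg _)).1 this

lemma norm_fst_sub_le_of_hasDerivWithinAt_smul_lorentzField (hs : Convex ℝ s)
    (hc : ∀ z, ‖c z‖ ≤ 1)
    (hZ : ∀ t ∈ s, HasDerivWithinAt Z (c (Z t) • lorentzField B ω (Z t)) s t)
    {t t' : ℝ} (ht : t ∈ s) (ht' : t' ∈ s) : ‖(Z t).1 - (Z t').1‖ ≤ ‖(Z t').2‖ * ‖t - t'‖ := by
  refine hs.norm_image_sub_le_of_norm_hasDerivWithin_le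
    (fun τ hτ ↦ hasFDerivAt_fst.comp_hasDerivWithinAt τ (hZ τ hτ)) (fun τ hτ ↦ ?_) ht' ht
  calc ‖c (Z τ) • (Z τ).2‖ = ‖c (Z τ)‖ * ‖(Z τ).2‖ := norm_smul _ _
    _ ≤ 1 * ‖(Z τ).2‖ := mul_le_mul_of_nonneg_right (hc _) (norm_nonneg _)
    _ = ‖(Z t').2‖ := by
      rw [one_mul, norm_snd_eq_of_hasDerivWithinAt_smul_lorentzField hs hZ hτ ht']

end SpeedConservation

theorem exists_forall_mem_Icc_hasDerivWithinAt_lorentzField (hB : LocallyLipschitz B) (ω : ℝ)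
    (z₀ : E3 × E3) {T : ℝ} (hT : 0 ≤ T) :
    ∃ α : ℝ → E3 × E3, α 0 = z₀ ∧
      ∀ t ∈ Icc (-T) T, HasDerivWithinAt α (lorentzField B ω (α t)) (Icc (-T) T) t := by
  -- `R` bounds both `‖x t‖ ≤ ‖x₀‖ + T ‖v₀‖` and `‖x' t‖ = ‖v₀‖` on `[-T, T]`.
  set R := ‖z₀.1‖ + (T + 1) * ‖z₀.2‖
  have hF := locallyLipschitz_lorentzField hB ω
  obtain ⟨C, hC⟩ := hF.continuous.exists_norm_cutoff_smul_le R
  obtain ⟨α, hα0, hα⟩ :=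
    (hF.cutoff_smul R).exists_forall_mem_Icc_hasDerivWithinAt_of_norm_le hC z₀ hT
  have h0 : (0 : ℝ) ∈ Icc (-T) T := ⟨neg_nonpos.2 hT, hT⟩
  have hR : ∀ t ∈ Icc (-T) T, ‖α t‖ ≤ R := fun t ht ↦ by
    have hspeed := norm_snd_eq_of_hasDerivWithinAt_smul_lorentzField (convex_Icc _ _) hα ht h0
    have hpos := norm_fst_sub_le_of_hasDerivWithinAt_smul_lorentzField (convex_Icc _ _)
      (norm_cutoff_le_one R) hα ht h0
    have htT : ‖t - 0‖ ≤ T := by rw [sub_zero, Real.norm_eq_abs, abs_le]; exact ht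
    rw [hα0] at hspeed hpos
    rw [Prod.norm_def]
    refine max_le ?_ (by nlinarith [norm_nonneg z₀.1, norm_nonneg z₀.2])
    calc ‖(α t).1‖ ≤ ‖(α t).1 - z₀.1‖ + ‖z₀.1‖ := norm_le_norm_sub_add _ _
      _ ≤ ‖z₀.2‖ * T + ‖z₀.1‖ := by gcongr; exact hpos.trans (by gcongr)
      _ ≤ R := by nlinarith [norm_nonneg z₀.2]
  refine ⟨α, hα0, fun t ht ↦ ?_⟩
  simpa [cutoff_eq_one (hR t ht)] using hα t ht

theorem exists_forall_hasDerivAt_lorentzField (hB : LocallyLipschitz B) (ω : ℝ) (z₀ : E3 × E3) :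
    ∃ Z : ℝ → E3 × E3, Z 0 = z₀ ∧ ∀ t, HasDerivAt Z (lorentzField B ω (Z t)) t :=
  (locallyLipschitz_lorentzField hB ω).exists_forall_hasDerivAt_of_forall_Icc z₀ fun _ hT ↦
    exists_forall_mem_Icc_hasDerivWithinAt_lorentzField hB ω z₀ hT.le

lemma IsLorentzSol.hasDerivAt_lorentzField {ω : ℝ} {x₀ v₀ : E3} {x : ℝ → E3}
    (hx : IsLorentzSol B ω x₀ v₀ x) (t : ℝ) :
    HasDerivAt (fun t ↦ (x t, deriv x t)) (lorentzField B ω (x t, deriv x t)) t :=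
  (hx.2.2.1 t).hasDerivAt.prodMk (hx.2.2.2 t)

section PhaseCurve

variable {ω : ℝ} {Z : ℝ → E3 × E3}

lemma hasDerivAt_fst_of_hasDerivAt_lorentzField
    (hZ : ∀ t, HasDerivAt Z (lorentzField B ω (Z t)) t) (t : ℝ) :
    HasDerivAt (fun t ↦ (Z t).1) (Z t).2 t :=
  (ContinuousLinearMap.fst ℝ E3 E3).hasFDerivAt.comp_hasDerivAt t (hZ t)

lemma hasDerivAt_snd_of_hasDerivAt_lorentzField
    (hZ : ∀ t, HasDerivAt Z (lorentzField B ω (Z t)) t) (t : ℝ) :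
    HasDerivAt (fun t ↦ (Z t).2) (ω • cross3 (Z t).2 (B (Z t).1)) t :=
  (ContinuousLinearMap.snd ℝ E3 E3).hasFDerivAt.comp_hasDerivAt t (hZ t)

lemma deriv_fst_of_hasDerivAt_lorentzField (hZ : ∀ t, HasDerivAt Z (lorentzField B ω (Z t)) t) :
    deriv (fun t ↦ (Z t).1) = fun t ↦ (Z t).2 :=
  funext fun t ↦ (hasDerivAt_fst_of_hasDerivAt_lorentzField hZ t).deriv

lemma isLorentzSol_fst {x₀ v₀ : E3} (hZ0 : Z 0 = (x₀, v₀))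
    (hZ : ∀ t, HasDerivAt Z (lorentzField B ω (Z t)) t) :
    IsLorentzSol B ω x₀ v₀ fun t ↦ (Z t).1 := by
  rw [IsLorentzSol, deriv_fst_of_hasDerivAt_lorentzField hZ]
  exact ⟨congrArg Prod.fst hZ0, congrArg Prod.snd hZ0,
    fun t ↦ (hasDerivAt_fst_of_hasDerivAt_lorentzField hZ t).differentiableAt,
    hasDerivAt_snd_of_hasDerivAt_lorentzField hZ⟩

lemma contDiff_two_fst_of_hasDerivAt_lorentzField (hB : Continuous B)
    (hZ : ∀ t, HasDerivAt Z (lorentzField B ω (Z t)) t) : ContDiff ℝ 2 fun t ↦ (Z t).1 := by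
  have hZ1 : ContDiff ℝ 1 Z := contDiff_one_of_hasDerivAt (continuous_lorentzField hB ω) hZ
  rw [show (2 : WithTop ℕ∞) = 1 + 1 from rfl, contDiff_succ_iff_deriv,
    deriv_fst_of_hasDerivAt_lorentzField hZ]
  exact ⟨contDiff_fst.differentiable_one.comp (hZ1.differentiable one_ne_zero), by simp,
    contDiff_snd.comp hZ1⟩

lemma exists_lipschitzOnWith_deriv_deriv_fst (hB : LocallyLipschitz B)
    (hZ : ∀ t, HasDerivAt Z (lorentzField B ω (Z t)) t) {K : Set ℝ} (hK : IsCompact K) :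
    ∃ L, LipschitzOnWith L (deriv (deriv fun t ↦ (Z t).1)) K := by
  have hZ1 : ContDiff ℝ 1 Z :=
    contDiff_one_of_hasDerivAt (locallyLipschitz_lorentzField hB ω).continuous hZ
  have hsnd : deriv (fun t ↦ (Z t).2) = fun t ↦ (lorentzField B ω (Z t)).2 :=
    funext fun t ↦ (hasDerivAt_snd_of_hasDerivAt_lorentzField hZ t).deriv
  rw [deriv_fst_of_hasDerivAt_lorentzField hZ, hsnd]
  have hlip : LocallyLipschitz fun t ↦ (lorentzField B ω (Z t)).2 :=
    (LipschitzWith.prod_snd.locallyLipschitz.comp (locallyLipschitz_lorentzField hB ω)).comp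
      hZ1.locallyLipschitz
  exact hlip.locallyLipschitzOn.exists_lipschitzOnWith_of_compact hK

end PhaseCurve

end LorentzField

theorem lorentz_global_wellposedness
    (B : E3 → E3)
    (hB : ∀ K : Set E3, IsCompact K → ∃ L : NNReal, LipschitzOnWith L B K)
    (x₀ v₀ : E3) (ω : ℝ) :
    ∃ x : ℝ → E3, IsLorentzSol B ω x₀ v₀ x ∧ ContDiff ℝ 2 x ∧
      (∀ K : Set ℝ, IsCompact K → ∃ L : NNReal, LipschitzOnWith L (deriv (deriv x)) K) ∧
      (∀ y : ℝ → E3, IsLorentzSol B ω x₀ v₀ y → y = x) := by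
  have hBl : LocallyLipschitz B := .of_forall_isCompact hB
  obtain ⟨Z, hZ0, hZ⟩ := exists_forall_hasDerivAt_lorentzField hBl ω (x₀, v₀)
  refine ⟨fun t ↦ (Z t).1, isLorentzSol_fst hZ0 hZ,
    contDiff_two_fst_of_hasDerivAt_lorentzField hBl.continuous hZ,
    fun K hK ↦ exists_lipschitzOnWith_deriv_deriv_fst hBl hZ hK, fun y hy ↦ ?_⟩
  have hphase : (fun t ↦ (y t, deriv y t)) = Z :=
    (locallyLipschitz_lorentzField hBl ω).eq_of_hasDerivAt hy.hasDerivAt_lorentzField hZ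
      (t₀ := 0) (by rw [hZ0, hy.1, hy.2.1])
  exact funext fun t ↦ congrArg Prod.fst (congrFun hphase t)
end
end

section
/- Let B ∈ C² with div(B) = 0 and B(y) ≠ 0 for all y ∈ ℝ³, fix x₀, v₀ ∈ ℝ³, and let (x, h) be the unique global solution of the limit system. Define the magnetic moment μ(t) := (|v₀|² − h(t)²)/(2|B(x(t))|). Then μ(t) = μ(0) = μ₀ for all t ∈ ℝ. -/
noncomputable section

open Real Filter Topology MeasureTheory intervalIntegral Bornology

/-!
Since `div B = 0`, the unit field `b = B/|B|` has `div b = B · ∇(1/|B|)`, so along the limit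
system `1/|B(x)|` has logarithmic derivative `h div b(x)`, while `(|v₀|² - h²)/2` has logarithmic
derivative `-h div b(x)`. Their product, the magnetic moment, therefore has zero derivative.
-/

theorem apply_eq_sum_mul_apply_single {ι : Type*} [Fintype ι] [DecidableEq ι]
    (L : EuclideanSpace ℝ ι →L[ℝ] ℝ) (v : EuclideanSpace ℝ ι) :
    L v = ∑ i, v i * L (EuclideanSpace.single i 1) := by
  conv_lhs => rw [← (EuclideanSpace.basisFun ι ℝ).sum_repr v]
  simp [map_sum]

theorem divg_smul {g : E3 → ℝ} {F : E3 → E3} {y : E3}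
    (hg : DifferentiableAt ℝ g y) (hF : DifferentiableAt ℝ F y) :
    divg (fun z => g z • F z) y = g y * divg F y + fderiv ℝ g y (F y) := by
  rw [divg, divg, fderiv_fun_smul hg hF,
    apply_eq_sum_mul_apply_single (fderiv ℝ g y), Finset.mul_sum, ← Finset.sum_add_distrib]
  refine Finset.sum_congr rfl fun i _ => ?_
  simp only [add_apply, smul_apply, ContinuousLinearMap.smulRight_apply, PiLp.add_apply,
    PiLp.smul_apply, smul_eq_mul]
  ring

theorem divg_bdir_of_divg_eq_zero {B : E3 → E3} {y : E3} (hB : DifferentiableAt ℝ B y)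
    (hBy : B y ≠ 0) (hdiv : divg B y = 0) :
    divg (bdir B) y = fderiv ℝ (fun z => ‖B z‖⁻¹) y (B y) := by
  have hinv : DifferentiableAt ℝ (fun z => ‖B z‖⁻¹) y :=
    (hB.norm ℝ hBy).inv (norm_ne_zero_iff.mpr hBy)
  rw [show bdir B = fun z => ‖B z‖⁻¹ • B z from rfl, divg_smul hinv hB, hdiv, mul_zero, zero_add]

theorem hasDerivAt_inv_norm_comp {B : E3 → E3} {x : ℝ → E3} {h : ℝ → ℝ} {t : ℝ}
    (hB : DifferentiableAt ℝ B (x t)) (hBx : B (x t) ≠ 0) (hdiv : divg B (x t) = 0)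
    (hx : HasDerivAt x (h t • bdir B (x t)) t) :
    HasDerivAt (fun s => ‖B (x s)‖⁻¹) (h t * ‖B (x t)‖⁻¹ * divg (bdir B) (x t)) t := by
  have hinv : DifferentiableAt ℝ (fun z => ‖B z‖⁻¹) (x t) :=
    (hB.norm ℝ hBx).inv (norm_ne_zero_iff.mpr hBx)
  refine (hinv.hasFDerivAt.comp_hasDerivAt t hx).congr_deriv ?_
  rw [divg_bdir_of_divg_eq_zero hB hBx hdiv, bdir, map_smul, map_smul, smul_eq_mul, smul_eq_mul,
    mul_assoc]

def magneticMoment (B : E3 → E3) (v₀ : E3) (x : ℝ → E3) (h : ℝ → ℝ) (t : ℝ) : ℝ :=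
  (‖v₀‖ ^ 2 - h t ^ 2) / (2 * ‖B (x t)‖)

theorem hasDerivAt_magneticMoment {B : E3 → E3} {v₀ : E3} {x : ℝ → E3} {h : ℝ → ℝ} {t : ℝ}
    (hB : DifferentiableAt ℝ B (x t)) (hBx : B (x t) ≠ 0) (hdiv : divg B (x t) = 0)
    (hx : HasDerivAt x (h t • bdir B (x t)) t)
    (hh : HasDerivAt h ((‖v₀‖ ^ 2 - h t ^ 2) / 2 * divg (bdir B) (x t)) t) :
    HasDerivAt (magneticMoment B v₀ x h) 0 t := by
  have hmoment : magneticMoment B v₀ x h = fun s => (‖v₀‖ ^ 2 - h s ^ 2) / 2 * ‖B (x s)‖⁻¹ := by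
    funext s
    rw [magneticMoment]
    ring
  have hkinetic := ((hasDerivAt_const t (‖v₀‖ ^ 2)).fun_sub (hh.fun_pow 2)).div_const 2
  rw [hmoment]
  refine (hkinetic.fun_mul (hasDerivAt_inv_norm_comp hB hBx hdiv hx)).congr_deriv ?_
  norm_num
  ring

theorem magnetic_moment_preservation
    (B : E3 → E3) (hB : IsCkBounded 2 B) (hdiv : ∀ y : E3, divg B y = 0)
    (hB0 : ∀ y : E3, B y ≠ 0) (x₀ v₀ : E3)
    (x : ℝ → E3) (h : ℝ → ℝ) (hlim : IsLimitSol B x₀ v₀ x h) :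
    ∀ t : ℝ, (‖v₀‖ ^ 2 - h t ^ 2) / (2 * ‖B (x t)‖)
      = (‖v₀‖ ^ 2 - (inner ℝ v₀ (bdir B x₀) : ℝ) ^ 2) / (2 * ‖B x₀‖) := by
  obtain ⟨hx0, hh0, hx, hh⟩ := hlim
  have hBd : Differentiable ℝ B := hB.1.differentiable (by norm_num)
  have hderiv (s : ℝ) : HasDerivAt (magneticMoment B v₀ x h) 0 s :=
    hasDerivAt_magneticMoment (hBd _) (hB0 _) (hdiv _) (hx s) (hh s)
  intro t
  have hconst := is_const_of_deriv_eq_zero (fun s => (hderiv s).differentiableAt)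
    (fun s => (hderiv s).deriv) t 0
  rwa [magneticMoment, magneticMoment, hx0, hh0] at hconst
end
end

section
/- Let b : ℝ³ → ℝ³ be a continuously differentiable unit vector field, i.e. |b(x)| = 1 for all x ∈ ℝ³, and let v ∈ ℝ³ be a fixed vector. Then for every x ∈ ℝ³: vᵀ·Db(x)·v + (v × b(x))ᵀ·Db(x)·(v × b(x)) = div(b)(x)(|v|² − (v·b(x))²) − (v·b(x)) (v × b(x))·curl(b)(x), where Db denotes the Jacobian matrix of b. -/
/-!
Write `A = Db(x)`. Differentiating `‖b‖² = 1` gives `⟪A u, b x⟫ = 0` for every `u`, and the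
identity follows from the polynomial identity in the coordinates of `A`, `b x` and `v`
`LHS - RHS = ⟪A c, b x⟫ + (tr A * ‖v‖² - ⟪v, A v⟫) * (‖b x‖² - 1)`, `c = 2⟪v, b x⟫ v - ‖v‖² b x`.
-/

noncomputable section

open Real Filter Topology MeasureTheory intervalIntegral Bornology

/-- Where `f` is not differentiable, `fderiv` is `0` and the claim is trivial. -/
theorem inner_fderiv_apply_self_eq_zero {E F : Type*} [NormedAddCommGroup E] [NormedSpace ℝ E]
    [NormedAddCommGroup F] [InnerProductSpace ℝ F] {f : E → F} {c : ℝ} (hf : ∀ x, ‖f x‖ = c)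
    (x u : E) : inner ℝ (fderiv ℝ f x u) (f x) = 0 := by
  by_cases hfx : DifferentiableAt ℝ f x
  · have hconst : (‖f ·‖ ^ 2) = fun _ => c ^ 2 := funext fun y => by rw [hf]
    have h := hfx.hasFDerivAt.norm_sq.fderiv
    rw [hconst, fderiv_const_apply] at h
    have hu := congrArg (· u) h
    simp only [zero_apply, smul_apply, ContinuousLinearMap.comp_apply, coe_innerSL_apply,
      nsmul_eq_mul, Nat.cast_ofNat, zero_eq_mul, OfNat.ofNat_ne_zero, false_or] at hu
    rwa [real_inner_comm]
  · simp [fderiv_zero_of_not_differentiableAt hfx]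

theorem EuclideanSpace.apply_eq_sum_smul_single {𝕜 ι F : Type*} [RCLike 𝕜] [Fintype ι]
    [DecidableEq ι] [AddCommMonoid F] [Module 𝕜 F] [TopologicalSpace F]
    (A : EuclideanSpace 𝕜 ι →L[𝕜] F) (u : EuclideanSpace 𝕜 ι) :
    A u = ∑ j, u j • A (EuclideanSpace.single j 1) := by
  conv_lhs => rw [← (EuclideanSpace.basisFun ι 𝕜).sum_repr u]
  simp [map_sum, map_smul]

theorem inner_fderiv_add_inner_fderiv_cross3 (F : E3 → E3) (x v : E3) (hnorm : ‖F x‖ = 1)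
    (horth : ∀ u, inner ℝ (fderiv ℝ F x u) (F x) = 0) :
    inner ℝ v (fderiv ℝ F x v) + inner ℝ (cross3 v (F x)) (fderiv ℝ F x (cross3 v (F x)))
      = divg F x * (‖v‖ ^ 2 - inner ℝ v (F x) ^ 2)
        - inner ℝ v (F x) * inner ℝ (cross3 v (F x)) (curl3 F x) := by
  obtain ⟨a, hA⟩ : ∃ a : Fin 3 → Fin 3 → ℝ, ∀ u i, fderiv ℝ F x u i = ∑ j, u j * a i j :=
    ⟨fun i j => fderiv ℝ F x (EuclideanSpace.single j 1) i, fun u i => by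
      rw [EuclideanSpace.apply_eq_sum_smul_single (fderiv ℝ F x) u]; simp⟩
  set c := (2 * inner ℝ v (F x)) • v - ‖v‖ ^ 2 • F x
  have horth_c := horth c
  have hnorm_sq : (divg F x * ‖v‖ ^ 2 - inner ℝ v (fderiv ℝ F x v)) * (‖F x‖ ^ 2 - 1) = 0 := by
    rw [hnorm]; ring
  simp only [divg, curl3, cross3, c, map_sub, map_smul, PiLp.inner_apply, RCLike.inner_apply,
    conj_trivial, EuclideanSpace.norm_sq_eq, norm_eq_abs, sq_abs, PiLp.sub_apply, PiLp.smul_apply,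
    smul_eq_mul, WithLp.equiv_symm_apply] at horth_c hnorm_sq ⊢
  simp only [hA, PiLp.single_apply, ite_mul, one_mul, zero_mul, Finset.sum_ite_eq', Finset.mem_univ,
    if_true, Fin.sum_univ_three, Matrix.cons_val_zero, Matrix.cons_val_one,
    Matrix.cons_val] at horth_c hnorm_sq ⊢
  linear_combination horth_c + hnorm_sq

theorem unit_field_quadratic_identity_general
    (b : E3 → E3) (hunit : ∀ x : E3, ‖b x‖ = 1) (v : E3) :
    ∀ x : E3,
      (inner ℝ v (fderiv ℝ b x v) : ℝ)
        + (inner ℝ (cross3 v (b x)) (fderiv ℝ b x (cross3 v (b x))) : ℝ)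
      = divg b x * (‖v‖ ^ 2 - (inner ℝ v (b x) : ℝ) ^ 2)
        - (inner ℝ v (b x) : ℝ) * (inner ℝ (cross3 v (b x)) (curl3 b x) : ℝ) := fun x =>
  inner_fderiv_add_inner_fderiv_cross3 b x v (hunit x) (inner_fderiv_apply_self_eq_zero hunit x)

theorem unit_field_quadratic_identity
    (b : E3 → E3) (hb : ContDiff ℝ 1 b) (hunit : ∀ x : E3, ‖b x‖ = 1) (v : E3) :
    ∀ x : E3,
      (inner ℝ v (fderiv ℝ b x v) : ℝ)
        + (inner ℝ (cross3 v (b x)) (fderiv ℝ b x (cross3 v (b x))) : ℝ)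
      = divg b x * (‖v‖ ^ 2 - (inner ℝ v (b x) : ℝ) ^ 2)
        - (inner ℝ v (b x) : ℝ) * (inner ℝ (cross3 v (b x)) (curl3 b x) : ℝ) :=
  unit_field_quadratic_identity_general b hunit v
end
end

section
/- Let B ∈ C³ with div(B) = 0 and B(y) ≠ 0 for all y ∈ ℝ³, let Ω ⊂ ℝ³ be a bounded domain with C³ boundary and p ∈ C³(closure Ω) such that B × curl(B) = ∇p in Ω and both B and curl(B) are tangent to ∂Ω. Fix x₀ ∈ Ω and v₀ ∈ ℝ³, and let (x, h) be the unique global solution of the limit system. Then there exists a constant C > 0, independent of t and ω, such that for every ω > 0 and every t ≥ 0 with x_ω(s) ∈ Ω and x(s) ∈ Ω for all s ∈ [0,t]: |p(x_ω(t)) − p(x₀)| ≤ C(1 + t)/ω + (C/ω²) exp(C exp(C t²)); in other words, the pressure along a particle trajectory drifts away from its initial value at worst linearly in time at order 1/ω. -/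
noncomputable section

open Real Filter Topology MeasureTheory intervalIntegral Bornology

/-! Since `∇p = B × J` with `J = curl B`, along a Lorentz trajectory
`d/ds p(x_ω) = ⟪B × J, v⟫ = ⟪v × B, J⟫ = ω⁻¹ ⟪v', J(x_ω)⟫`. Integrating by parts in time
moves the derivative onto `J(x_ω(s))`, whose derivative is `DJ(x_ω) v`. The speed `|v| = |v₀|`
is conserved and `J`, `DJ` are bounded because `B ∈ C²`, so
`|p(x_ω(t)) - p(x₀)| ≤ (2 |v₀| sup |J| + t |v₀|² sup |DJ|) / ω`. -/

open scoped RealInnerProductSpace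

lemma inner_eq_sum_three (u w : E3) : ⟪u, w⟫ = u 0 * w 0 + u 1 * w 1 + u 2 * w 2 := by
  simp only [PiLp.inner_apply, RCLike.inner_apply, conj_trivial, Fin.sum_univ_three]
  ring

@[simp] lemma cross3_apply_zero (u v : E3) : cross3 u v 0 = u 1 * v 2 - u 2 * v 1 := rfl
@[simp] lemma cross3_apply_one (u v : E3) : cross3 u v 1 = u 2 * v 0 - u 0 * v 2 := rfl
@[simp] lemma cross3_apply_two (u v : E3) : cross3 u v 2 = u 0 * v 1 - u 1 * v 0 := rfl

lemma inner_cross3_self_left (a b : E3) : ⟪cross3 a b, a⟫ = 0 := by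
  simp only [inner_eq_sum_three, cross3_apply_zero, cross3_apply_one, cross3_apply_two]
  ring

lemma inner_cross3_cyclic (a b c : E3) : ⟪cross3 a b, c⟫ = ⟪cross3 c a, b⟫ := by
  simp only [inner_eq_sum_three, cross3_apply_zero, cross3_apply_one, cross3_apply_two]
  ring

lemma Continuous.cross3 {α : Type*} [TopologicalSpace α] {f g : α → E3}
    (hf : Continuous f) (hg : Continuous g) : Continuous fun a => cross3 (f a) (g a) := by
  refine (PiLp.continuous_toLp 2 _).comp (continuous_pi fun i => ?_)
  fin_cases i <;> simp only [Fin.zero_eta, Fin.mk_one, Fin.reduceFinMk, Matrix.cons_val] <;>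
    fun_prop

def curlCLM : (E3 →L[ℝ] E3) →L[ℝ] E3 :=
  let ℓ (i j : Fin 3) : (E3 →L[ℝ] E3) →L[ℝ] ℝ :=
    (EuclideanSpace.proj j).comp (ContinuousLinearMap.apply ℝ E3 (EuclideanSpace.single i 1))
  (ℓ 1 2 - ℓ 2 1).smulRight (EuclideanSpace.single 0 1) +
    (ℓ 2 0 - ℓ 0 2).smulRight (EuclideanSpace.single 1 1) +
    (ℓ 0 1 - ℓ 1 0).smulRight (EuclideanSpace.single 2 1)

lemma curl3_eq_curlCLM_comp (F : E3 → E3) : curl3 F = curlCLM ∘ fderiv ℝ F := by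
  ext y i
  fin_cases i <;> simp [curl3, curlCLM]

lemma IsCkBounded.of_le {k m : ℕ} {B : E3 → E3} (hB : IsCkBounded k B) (hmk : m ≤ k) :
    IsCkBounded m B :=
  ⟨hB.1.of_le (by exact_mod_cast hmk), fun i hi => hB.2 i (hi.trans hmk)⟩

lemma IsCkBounded.curl3 {k : ℕ} {B : E3 → E3} (hB : IsCkBounded (k + 1) B) :
    IsCkBounded k (curl3 B) := by
  have hD : ContDiff ℝ k (fderiv ℝ B) := hB.1.fderiv_right (by push_cast; rfl)
  rw [curl3_eq_curlCLM_comp]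
  refine ⟨curlCLM.contDiff.comp hD, fun i hi => ?_⟩
  obtain ⟨M, hM⟩ := hB.2 (i + 1) (by omega)
  refine ⟨‖curlCLM‖ * M, fun y => ?_⟩
  calc ‖iteratedFDeriv ℝ i (curlCLM ∘ fderiv ℝ B) y‖
      ≤ ‖curlCLM‖ * ‖iteratedFDeriv ℝ i (fderiv ℝ B) y‖ :=
        curlCLM.norm_iteratedFDeriv_comp_left hD.contDiffAt (by exact_mod_cast hi)
    _ ≤ ‖curlCLM‖ * M := by
        rw [norm_iteratedFDeriv_fderiv]
        gcongr
        exact hM y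

lemma IsCkBounded.exists_bound_norm_fderiv {Φ : E3 → E3} (hΦ : IsCkBounded 1 Φ) :
    ∃ K₀ K₁ : ℝ, 0 ≤ K₀ ∧ 0 ≤ K₁ ∧ ∀ y, ‖Φ y‖ ≤ K₀ ∧ ‖fderiv ℝ Φ y‖ ≤ K₁ := by
  obtain ⟨K₀, hK₀⟩ := hΦ.2 0 zero_le_one
  obtain ⟨K₁, hK₁⟩ := hΦ.2 1 le_rfl
  simp only [norm_iteratedFDeriv_zero, norm_iteratedFDeriv_one] at hK₀ hK₁
  exact ⟨K₀, K₁, (norm_nonneg _).trans (hK₀ 0), (norm_nonneg _).trans (hK₁ 0),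
    fun y => ⟨hK₀ y, hK₁ y⟩⟩

namespace IsLorentzSol

variable {B : E3 → E3} {ω : ℝ} {x₀ v₀ : E3} {x : ℝ → E3}

lemma hasDerivAt (hx : IsLorentzSol B ω x₀ v₀ x) (s : ℝ) : HasDerivAt x (deriv x s) s :=
  (hx.2.2.1 s).hasDerivAt

lemma continuous_deriv (hx : IsLorentzSol B ω x₀ v₀ x) : Continuous (deriv x) :=
  continuous_iff_continuousAt.2 fun s => (hx.2.2.2 s).continuousAt

/-- The Lorentz force is orthogonal to the velocity. -/
lemma norm_deriv (hx : IsLorentzSol B ω x₀ v₀ x) (s : ℝ) : ‖deriv x s‖ = ‖v₀‖ := by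
  have hconst : ∀ s, HasDerivAt (fun s => ‖deriv x s‖ ^ 2) 0 s := fun s => by
    simpa [real_inner_smul_right, real_inner_comm (cross3 _ _), inner_cross3_self_left] using
      (hx.2.2.2 s).norm_sq
  have := is_const_of_deriv_eq_zero (fun s => (hconst s).differentiableAt)
    (fun s => (hconst s).deriv) s 0
  rwa [hx.2.1, sq_eq_sq₀ (norm_nonneg _) (norm_nonneg _)] at this

/-- Integration by parts against the equation of motion `ω (v × B) = v'`. -/
lemma integral_inner_cross3 (hx : IsLorentzSol B ω x₀ v₀ x) (hB : Continuous B)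
    {Φ : E3 → E3} (hΦ : ContDiff ℝ 1 Φ) (t : ℝ) :
    ω * ∫ s in (0:ℝ)..t, ⟪cross3 (deriv x s) (B (x s)), Φ (x s)⟫ =
      ⟪deriv x t, Φ (x t)⟫ - ⟪v₀, Φ x₀⟫ -
        ∫ s in (0:ℝ)..t, ⟪deriv x s, fderiv ℝ Φ (x s) (deriv x s)⟫ := by
  have hxc : Continuous x := continuous_iff_continuousAt.2 fun s => (hx.hasDerivAt s).continuousAt
  have hv := hx.continuous_deriv
  have hG : ∀ s, HasDerivAt (fun s => ⟪deriv x s, Φ (x s)⟫)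
      (⟪deriv x s, fderiv ℝ Φ (x s) (deriv x s)⟫ +
        ω * ⟪cross3 (deriv x s) (B (x s)), Φ (x s)⟫) s := fun s => by
    rw [← real_inner_smul_left]
    exact (hx.2.2.2 s).inner ℝ
      ((hΦ.differentiable one_ne_zero (x s)).hasFDerivAt.comp_hasDerivAt s (hx.hasDerivAt s))
  have hint₁ : Continuous fun s => ⟪deriv x s, fderiv ℝ Φ (x s) (deriv x s)⟫ :=
    hv.inner (((hΦ.continuous_fderiv one_ne_zero).comp hxc).clm_apply hv)
  have hint₂ : Continuous fun s => ⟪cross3 (deriv x s) (B (x s)), Φ (x s)⟫ :=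
    (hv.cross3 (hB.comp hxc)).inner (hΦ.continuous.comp hxc)
  have hint₂' : IntervalIntegrable
      (fun s => ω * ⟪cross3 (deriv x s) (B (x s)), Φ (x s)⟫) MeasureTheory.volume 0 t :=
    (continuous_const.mul hint₂).intervalIntegrable 0 t
  have hFTC := intervalIntegral.integral_eq_sub_of_hasDerivAt (fun s _ => hG s)
    ((hint₁.intervalIntegrable 0 t).add hint₂')
  rw [intervalIntegral.integral_add (hint₁.intervalIntegrable 0 t) hint₂',
    intervalIntegral.integral_const_mul, hx.1, hx.2.1] at hFTC
  linarith

lemma abs_integral_inner_cross3_le (hx : IsLorentzSol B ω x₀ v₀ x) (hω : 0 < ω)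
    (hB : Continuous B) {Φ : E3 → E3} (hΦ : ContDiff ℝ 1 Φ) {K₀ K₁ : ℝ}
    (hK₀ : ∀ y, ‖Φ y‖ ≤ K₀) (hK₁ : ∀ y, ‖fderiv ℝ Φ y‖ ≤ K₁) {t : ℝ} (ht : 0 ≤ t) :
    |∫ s in (0:ℝ)..t, ⟪cross3 (deriv x s) (B (x s)), Φ (x s)⟫| ≤
      (2 * ‖v₀‖ * K₀ + ‖v₀‖ ^ 2 * K₁ * t) / ω := by
  have hbd : ∀ s, |⟪deriv x s, Φ (x s)⟫| ≤ ‖v₀‖ * K₀ := fun s =>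
    (abs_real_inner_le_norm _ _).trans (by rw [hx.norm_deriv]; gcongr; exact hK₀ _)
  have hbd' : |∫ s in (0:ℝ)..t, ⟪deriv x s, fderiv ℝ Φ (x s) (deriv x s)⟫| ≤
      ‖v₀‖ ^ 2 * K₁ * t := by
    have := intervalIntegral.norm_integral_le_of_norm_le_const (a := 0) (b := t)
      (f := fun s => ⟪deriv x s, fderiv ℝ Φ (x s) (deriv x s)⟫) (C := ‖v₀‖ ^ 2 * K₁)
      fun s _ => by
        calc ‖⟪deriv x s, fderiv ℝ Φ (x s) (deriv x s)⟫‖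
            ≤ ‖deriv x s‖ * (‖fderiv ℝ Φ (x s)‖ * ‖deriv x s‖) :=
              (norm_inner_le_norm _ _).trans (by gcongr; exact ContinuousLinearMap.le_opNorm _ _)
          _ ≤ ‖v₀‖ ^ 2 * K₁ := by rw [hx.norm_deriv]; nlinarith [hK₁ (x s), norm_nonneg v₀]
    simpa [abs_of_nonneg ht] using this
  have h₀ := hbd 0
  rw [hx.1, hx.2.1] at h₀
  rw [le_div_iff₀ hω]
  calc _ = |ω * ∫ s in (0:ℝ)..t, ⟪cross3 (deriv x s) (B (x s)), Φ (x s)⟫| := by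
        rw [abs_mul, abs_of_pos hω, mul_comm]
    _ = |⟪deriv x t, Φ (x t)⟫ - ⟪v₀, Φ x₀⟫ -
          ∫ s in (0:ℝ)..t, ⟪deriv x s, fderiv ℝ Φ (x s) (deriv x s)⟫| := by
        rw [hx.integral_inner_cross3 hB hΦ]
    _ ≤ |⟪deriv x t, Φ (x t)⟫| + |⟪v₀, Φ x₀⟫| +
          |∫ s in (0:ℝ)..t, ⟪deriv x s, fderiv ℝ Φ (x s) (deriv x s)⟫| :=
        (abs_sub _ _).trans (by gcongr; exact abs_sub _ _)
    _ ≤ _ := by linarith [hbd t]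

end IsLorentzSol

lemma sub_eq_integral_of_cross3_eq_gradient {Ω : Set E3} (hΩ : IsOpen Ω) {p : E3 → ℝ}
    (hp : DifferentiableOn ℝ p Ω) {B J : E3 → E3} (hB : Continuous B) (hJ : Continuous J)
    (hpBJ : ∀ y ∈ Ω, cross3 (B y) (J y) = gradient p y)
    {x v : ℝ → E3} (hx : ∀ s, HasDerivAt x (v s) s) (hv : Continuous v) {t : ℝ} (ht : 0 ≤ t)
    (hxΩ : ∀ s ∈ Set.Icc 0 t, x s ∈ Ω) :
    p (x t) - p (x 0) = ∫ s in (0:ℝ)..t, ⟪cross3 (v s) (B (x s)), J (x s)⟫ := by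
  have hxc : Continuous x := continuous_iff_continuousAt.2 fun s => (hx s).continuousAt
  have hint : Continuous fun s => ⟪cross3 (v s) (B (x s)), J (x s)⟫ :=
    (hv.cross3 (hB.comp hxc)).inner (hJ.comp hxc)
  refine (intervalIntegral.integral_eq_sub_of_hasDerivAt (f := fun s => p (x s)) (fun s hs => ?_)
    (hint.intervalIntegrable 0 t)).symm
  rw [Set.uIcc_of_le ht] at hs
  have hpx := (hp.differentiableAt (hΩ.mem_nhds (hxΩ s hs))).hasGradientAt
  rw [← inner_cross3_cyclic, hpBJ _ (hxΩ s hs)]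
  exact hpx.hasFDerivAt.comp_hasDerivAt s (hx s)

theorem pressure_drift_at_worst_linear_general
    (B : E3 → E3) (hB : IsCkBounded 3 B)
    (Ω : Set E3) (hΩo : IsOpen Ω)
    -- the pressure is C³ on the closure of Ω and B is a plasma equilibrium
    (p : E3 → ℝ) (hp : ContDiffOn ℝ 3 p (closure Ω))
    (hmhd : ∀ y ∈ Ω, cross3 (B y) (curl3 B y) = gradient p y)
    (x₀ : E3) (v₀ : E3)
    (x : ℝ → E3)
    (xω : ℝ → ℝ → E3) (hxω : ∀ ω : ℝ, 0 < ω → IsLorentzSol B ω x₀ v₀ (xω ω)) :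
    ∃ C > (0:ℝ), ∀ ω > (0:ℝ), ∀ t ≥ (0:ℝ),
      (∀ s ∈ Set.Icc (0:ℝ) t, xω ω s ∈ Ω ∧ x s ∈ Ω) →
      |p (xω ω t) - p x₀|
        ≤ C * (1 + t) / ω + C / ω ^ 2 * Real.exp (C * Real.exp (C * t ^ 2)) := by
  have hJ : IsCkBounded 1 (curl3 B) := (hB.of_le (by norm_num : 2 ≤ 3)).curl3
  obtain ⟨K₀, K₁, hK₀, hK₁, hK⟩ := hJ.exists_bound_norm_fderiv
  have hBc : Continuous B := hB.1.continuous
  have hpΩ : DifferentiableOn ℝ p Ω := (hp.differentiableOn (by norm_num)).mono subset_closure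
  set C := 2 * ‖v₀‖ * K₀ + ‖v₀‖ ^ 2 * K₁ + 1
  refine ⟨C, by positivity, fun ω hω t ht hin => ?_⟩
  have hsol := hxω ω hω
  have hdrift := sub_eq_integral_of_cross3_eq_gradient hΩo hpΩ hBc hJ.1.continuous hmhd
    hsol.hasDerivAt hsol.continuous_deriv ht fun s hs => (hin s hs).1
  rw [hsol.1] at hdrift
  calc |p (xω ω t) - p x₀| ≤ (2 * ‖v₀‖ * K₀ + ‖v₀‖ ^ 2 * K₁ * t) / ω := by
        rw [hdrift]
        exact hsol.abs_integral_inner_cross3_le hω hBc hJ.1 (fun y => (hK y).1)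
          (fun y => (hK y).2) ht
    _ ≤ C * (1 + t) / ω := by
        gcongr
        nlinarith [mul_nonneg (mul_nonneg (norm_nonneg v₀) hK₀) ht]
    _ ≤ _ := le_add_of_nonneg_right (by positivity)

theorem pressure_drift_at_worst_linear
    (B : E3 → E3) (hB : IsCkBounded 3 B) (hdiv : ∀ y : E3, divg B y = 0)
    (hB0 : ∀ y : E3, B y ≠ 0)
    -- Ω is a bounded domain with C³ boundary, described by a C³ defining function ρ
    (Ω : Set E3) (hΩo : IsOpen Ω) (hΩc : IsConnected Ω) (hΩb : Bornology.IsBounded Ω)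
    (ρ : E3 → ℝ) (hρ : ContDiff ℝ 3 ρ) (hΩdef : Ω = {y : E3 | ρ y < 0})
    (hρreg : ∀ y ∈ frontier Ω, gradient ρ y ≠ 0)
    -- the pressure is C³ on the closure of Ω and B is a plasma equilibrium
    (p : E3 → ℝ) (hp : ContDiffOn ℝ 3 p (closure Ω))
    (hmhd : ∀ y ∈ Ω, cross3 (B y) (curl3 B y) = gradient p y)
    -- B and curl B are tangent to ∂Ω
    (htanB : ∀ y ∈ frontier Ω, (inner ℝ (B y) (gradient ρ y) : ℝ) = 0)
    (htanJ : ∀ y ∈ frontier Ω, (inner ℝ (curl3 B y) (gradient ρ y) : ℝ) = 0)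
    (x₀ : E3) (hx₀ : x₀ ∈ Ω) (v₀ : E3)
    (x : ℝ → E3) (h : ℝ → ℝ) (hlim : IsLimitSol B x₀ v₀ x h)
    (xω : ℝ → ℝ → E3) (hxω : ∀ ω : ℝ, 0 < ω → IsLorentzSol B ω x₀ v₀ (xω ω)) :
    ∃ C > (0:ℝ), ∀ ω > (0:ℝ), ∀ t ≥ (0:ℝ),
      (∀ s ∈ Set.Icc (0:ℝ) t, xω ω s ∈ Ω ∧ x s ∈ Ω) →
      |p (xω ω t) - p x₀|
        ≤ C * (1 + t) / ω + C / ω ^ 2 * Real.exp (C * Real.exp (C * t ^ 2)) :=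
  pressure_drift_at_worst_linear_general B hB Ω hΩo p hp hmhd x₀ v₀ x xω hxω
end
end

section
/- Let U ⊆ ℝ³ be open, let B : U → ℝ³ be twice continuously differentiable with B(y) ≠ 0 for all y ∈ U, set b(y) := B(y)/|B(y)|, and let p : U → ℝ be differentiable with ∇p = B × curl(B) on U. Then for all y ∈ U: (b(y) × ∇p(y)) · (Db(y)·b(y)) = (∇p(y) × B(y)) · ∇(|B|⁻¹)(y), where Db denotes the Jacobian matrix of b and ∇(|B|⁻¹) the gradient of y ↦ 1/|B(y)|. -/
noncomputable section

open Real Filter Topology MeasureTheory intervalIntegral Bornology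

/-! Write `n = |B y|` and `J = DB(y)`. Since `Db(y) v = n⁻¹ J v + (∇(n⁻¹) · v) B(y)` and
`b × ∇p ⊥ B`, the left side equals `n⁻³ (B × ∇p) · (J B)`. The pointwise identity
`B × curl B = Jᵀ B − J B`, together with `∇p = B × curl B ⊥ B × ∇p`, turns this into
`n⁻³ (J (B × ∇p)) · B`, which is the right side because `∇(n⁻¹) = −n⁻³ Jᵀ B`. -/

open InnerProductSpace
open scoped Matrix RealInnerProductSpace

theorem HasFDerivAt.norm_inv {G F : Type*} [NormedAddCommGroup G] [NormedSpace ℝ G]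
    [NormedAddCommGroup F] [InnerProductSpace ℝ F] {f : G → F} {f' : G →L[ℝ] F} {x : G}
    (hf : HasFDerivAt f f' x) (h0 : f x ≠ 0) :
    HasFDerivAt (fun y => ‖f y‖⁻¹) (-(‖f x‖ ^ 3)⁻¹ • (innerSL ℝ (f x)).comp f') x := by
  have hn : ‖f x‖ ≠ 0 := norm_ne_zero_iff.2 h0
  have hnorm : HasFDerivAt (fun y => ‖f y‖) (‖f x‖⁻¹ • (innerSL ℝ (f x)).comp f') x := by
    have hsqrt := hf.norm_sq.sqrt (pow_ne_zero 2 hn)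
    simp only [Real.sqrt_sq (norm_nonneg _)] at hsqrt
    refine hsqrt.congr_fderiv ?_
    ext v
    simp only [_root_.smul_apply, ContinuousLinearMap.comp_apply, coe_innerSL_apply,
      smul_eq_mul, one_div, mul_inv_rev, nsmul_eq_mul, Nat.cast_ofNat]
    field_simp
  refine ((hasDerivAt_inv hn).comp_hasFDerivAt x hnorm).congr_fderiv ?_
  ext v
  simp only [neg_smul, _root_.neg_apply, _root_.smul_apply,
    ContinuousLinearMap.comp_apply, coe_innerSL_apply, smul_eq_mul, neg_inj]
  ring

theorem cross3_eq_crossProduct (u v : E3) : cross3 u v = WithLp.toLp 2 (u.ofLp ⨯₃ v.ofLp) := by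
  rw [cross_apply]; rfl

theorem inner_cross3_self_left_s17 (u v : E3) : ⟪cross3 u v, u⟫ = 0 := by
  rw [cross3_eq_crossProduct, EuclideanSpace.inner_eq_star_dotProduct]
  simp

theorem inner_cross3_self_right (u v : E3) : ⟪cross3 u v, v⟫ = 0 := by
  rw [cross3_eq_crossProduct, EuclideanSpace.inner_eq_star_dotProduct]
  simp

theorem cross3_anticomm (u v : E3) : cross3 v u = -cross3 u v := by
  rw [cross3_eq_crossProduct, cross3_eq_crossProduct, ← cross_anticomm]; rfl

theorem cross3_smul_left (c : ℝ) (u v : E3) : cross3 (c • u) v = c • cross3 u v := by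
  simp [cross3_eq_crossProduct]

theorem E3.eq_sum_single (v : E3) : v = v 0 • EuclideanSpace.single 0 (1:ℝ)
    + v 1 • EuclideanSpace.single 1 (1:ℝ) + v 2 • EuclideanSpace.single 2 (1:ℝ) := by
  simpa [Fin.sum_univ_three] using ((EuclideanSpace.basisFun (Fin 3) ℝ).sum_repr v).symm

theorem inner_cross3_curl3 (F : E3 → E3) (y u w : E3) :
    ⟪w, cross3 u (curl3 F y)⟫ = ⟪fderiv ℝ F y w, u⟫ - ⟪w, fderiv ℝ F y u⟫ := by
  set A := fderiv ℝ F y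
  have hA : ∀ v : E3, A v = v 0 • A (EuclideanSpace.single 0 1)
      + v 1 • A (EuclideanSpace.single 1 1) + v 2 • A (EuclideanSpace.single 2 1) := fun v => by
    conv_lhs => rw [E3.eq_sum_single v]
    simp only [map_add, map_smul]
  rw [hA w, hA u]
  simp only [cross3, curl3, WithLp.equiv_symm_apply, Matrix.cons_val, Matrix.cons_val_one, Matrix.cons_val_zero,
    PiLp.inner_apply, RCLike.inner_apply, conj_trivial, Fin.sum_univ_three, PiLp.add_apply,
    PiLp.smul_apply, smul_eq_mul, A]
  ring

theorem HasFDerivAt.bdir {B : E3 → E3} {J : E3 →L[ℝ] E3} {y : E3} (hB : HasFDerivAt B J y)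
    (h0 : B y ≠ 0) :
    HasFDerivAt (bdir B)
      (‖B y‖⁻¹ • J + (-(‖B y‖ ^ 3)⁻¹ • (innerSL ℝ (B y)).comp J).smulRight (B y)) y :=
  (hB.norm_inv h0).smul hB

theorem equilibrium_curvature_identity_general
    (U : Set E3) (hU : IsOpen U) (B : E3 → E3) (hB : ContDiffOn ℝ 2 B U)
    (hB0 : ∀ y ∈ U, B y ≠ 0) (p : E3 → ℝ)
    (hmhd : ∀ y ∈ U, gradient p y = cross3 (B y) (curl3 B y)) :
    ∀ y ∈ U,
      (inner ℝ (cross3 (bdir B y) (gradient p y)) (fderiv ℝ (bdir B) y (bdir B y)) : ℝ)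
        = (inner ℝ (cross3 (gradient p y) (B y)) (gradient (fun z : E3 => ‖B z‖⁻¹) y) : ℝ) := by
  intro y hy
  have hJ : HasFDerivAt B (fderiv ℝ B y) y :=
    ((hB.contDiffAt (hU.mem_nhds hy)).differentiableAt two_ne_zero).hasFDerivAt
  set J := fderiv ℝ B y
  set g := gradient p y with hg
  have hJ_cross : ⟪cross3 (B y) g, J (B y)⟫ = ⟪J (cross3 (B y) g), B y⟫ := by
    have hcurl := inner_cross3_curl3 B y (B y) (cross3 (B y) g)
    rw [← hmhd y hy, ← hg, inner_cross3_self_right] at hcurl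
    linarith
  calc ⟪cross3 (bdir B y) g, fderiv ℝ (bdir B) y (bdir B y)⟫
      = (‖B y‖ ^ 3)⁻¹ * ⟪cross3 (B y) g, J (B y)⟫ := by
        rw [(hJ.bdir (hB0 y hy)).fderiv]
        simp only [bdir, cross3_smul_left, neg_smul, map_smul, _root_.add_apply,
          _root_.smul_apply, ContinuousLinearMap.smulRight_apply,
          _root_.neg_apply, ContinuousLinearMap.comp_apply, coe_innerSL_apply,
          smul_eq_mul, smul_add, smul_neg, inner_add_right, inner_smul_right, inner_smul_left,
          inner_neg_right, conj_trivial, inner_cross3_self_left_s17, mul_zero, neg_zero, add_zero]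
        ring
    _ = (‖B y‖ ^ 3)⁻¹ * ⟪J (cross3 (B y) g), B y⟫ := by rw [hJ_cross]
    _ = ⟪cross3 g (B y), gradient (fun z => ‖B z‖⁻¹) y⟫ := by
        rw [real_inner_comm (gradient _ _), inner_gradient_left, (hJ.norm_inv (hB0 y hy)).fderiv,
          cross3_anticomm]
        simp [real_inner_comm]

theorem equilibrium_curvature_identity
    (U : Set E3) (hU : IsOpen U) (B : E3 → E3) (hB : ContDiffOn ℝ 2 B U)
    (hB0 : ∀ y ∈ U, B y ≠ 0) (p : E3 → ℝ) (hp : DifferentiableOn ℝ p U)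
    (hmhd : ∀ y ∈ U, gradient p y = cross3 (B y) (curl3 B y)) :
    ∀ y ∈ U,
      (inner ℝ (cross3 (bdir B y) (gradient p y)) (fderiv ℝ (bdir B) y (bdir B y)) : ℝ)
        = (inner ℝ (cross3 (gradient p y) (B y)) (gradient (fun z : E3 => ‖B z‖⁻¹) y) : ℝ) :=
  equilibrium_curvature_identity_general U hU B hB hB0 p hmhd
end
end
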